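/- arXiv:1911.11454 — 2 statements merged into one kernel-verified Lean document; each statement's English description precedes it below -/
import Mathlib

section
/- Let H be a real Hilbert space, K ⊆ H a nonempty closed convex set, J : H → ℝ ∪ {+∞} its support function J(u) = sup_{h ∈ K} ⟨h, u⟩, α > 0 and f ∈ H. Then u_α ∈ H is the (unique) minimizer of u ↦ ½‖u − f‖² + α J(u) if and only if u_α is the (unique) element of minimal norm of the closed convex set f − αK; in particular ‖u_α‖ = min_{u ∈ f − αK} ‖u‖. -/
open scoped RealInnerProductSpace

/-- The support function `J(u) = sup_{h ∈ K} ⟨h, u⟩` of a set `K` in a real inner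
product space, with values in `ℝ ∪ {±∞}`. -/
noncomputable def suppFn {H : Type*} [NormedAddCommGroup H] [InnerProductSpace ℝ H]
    (K : Set H) (u : H) : EReal :=
  ⨆ h ∈ K, ((⟪h, u⟫ : ℝ) : EReal)

/-- The objective `u ↦ ½‖u − f‖² + α J(u)` where `J` is the support function of `K`,
with values in `ℝ ∪ {±∞}`. -/
noncomputable def rofObj {H : Type*} [NormedAddCommGroup H] [InnerProductSpace ℝ H]
    (K : Set H) (α : ℝ) (f u : H) : EReal :=
  ((2⁻¹ * ‖u - f‖ ^ 2 : ℝ) : EReal) + (α : EReal) * suppFn K u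

private lemma rof_key_identity {H : Type*} [NormedAddCommGroup H] [InnerProductSpace ℝ H]
    (α : ℝ) (k₀ f v : H) :
    2⁻¹ * ‖v - f‖ ^ 2 + α * ⟪k₀, v⟫ =
      (2⁻¹ * ‖(f - α • k₀) - f‖ ^ 2 + α * ⟪k₀, f - α • k₀⟫) + 2⁻¹ * ‖v - (f - α • k₀)‖ ^ 2 := by
  have h1 : ∀ x : H, ‖x‖ ^ 2 = ⟪x, x⟫ := fun x => (real_inner_self_eq_norm_sq x).symm
  simp only [h1, inner_sub_left, inner_sub_right, real_inner_smul_left, real_inner_smul_right]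
  ring_nf
  rw [real_inner_comm v f, real_inner_comm v k₀, real_inner_comm f k₀]
  ring

/-- If `u ∈ f - αK` and `⟪u, w - u⟫ ≥ 0` for all `w ∈ f - αK`, then `u` minimizes the
objective. -/
private lemma rof_min_of_proj {H : Type*} [NormedAddCommGroup H] [InnerProductSpace ℝ H]
    (K : Set H) (α : ℝ) (hα : 0 < α) (f u : H)
    (hu : ∃ k ∈ K, u = f - α • k)
    (hproj : ∀ w : H, (∃ k ∈ K, w = f - α • k) → 0 ≤ ⟪u, w - u⟫) :
    ∀ v : H, rofObj K α f u ≤ rofObj K α f v := by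
  obtain ⟨k₀, hk₀, rfl⟩ := hu
  set u := f - α • k₀ with hu_def
  -- the supremum in `suppFn K u` is attained at `k₀`
  have hsup_le : ∀ k ∈ K, ⟪k, u⟫ ≤ ⟪k₀, u⟫ := by
    intro k hk
    have h := hproj (f - α • k) ⟨k, hk, rfl⟩
    have hsub : (f - α • k) - u = α • (k₀ - k) := by
      rw [hu_def, smul_sub]; abel
    rw [hsub, real_inner_smul_right, inner_sub_right] at h
    have : 0 ≤ ⟪u, k₀⟫ - ⟪u, k⟫ := nonneg_of_mul_nonneg_right h hα
    have e1 := real_inner_comm u k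
    have e2 := real_inner_comm u k₀
    linarith
  have hsupp : suppFn K u = ((⟪k₀, u⟫ : ℝ) : EReal) := by
    apply le_antisymm
    · exact iSup₂_le fun k hk => EReal.coe_le_coe_iff.2 (hsup_le k hk)
    · exact le_iSup₂_of_le k₀ hk₀ le_rfl
  have hobju : rofObj K α f u = ((2⁻¹ * ‖u - f‖ ^ 2 + α * ⟪k₀, u⟫ : ℝ) : EReal) := by
    rw [rofObj, hsupp, ← EReal.coe_mul, ← EReal.coe_add]
  intro v
  have hv_lb : ((2⁻¹ * ‖v - f‖ ^ 2 + α * ⟪k₀, v⟫ : ℝ) : EReal) ≤ rofObj K α f v := by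
    have h1 : ((⟪k₀, v⟫ : ℝ) : EReal) ≤ suppFn K v := le_iSup₂_of_le k₀ hk₀ le_rfl
    have h2 : (α : EReal) * ((⟪k₀, v⟫ : ℝ) : EReal) ≤ (α : EReal) * suppFn K v :=
      mul_le_mul_of_nonneg_left h1 (by exact_mod_cast hα.le)
    calc ((2⁻¹ * ‖v - f‖ ^ 2 + α * ⟪k₀, v⟫ : ℝ) : EReal)
        = ((2⁻¹ * ‖v - f‖ ^ 2 : ℝ) : EReal) + (α : EReal) * ((⟪k₀, v⟫ : ℝ) : EReal) := by
          rw [← EReal.coe_mul, ← EReal.coe_add]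
      _ ≤ rofObj K α f v := add_le_add (le_refl _) h2
  refine le_trans ?_ hv_lb
  rw [hobju]
  apply EReal.coe_le_coe_iff.2
  rw [rof_key_identity α k₀ f v, ← hu_def]
  nlinarith [sq_nonneg ‖v - u‖, norm_nonneg (v - u)]

/-- Let `H` be a real Hilbert space, `K ⊆ H` nonempty closed convex,
`J` its support function, `α > 0` and `f ∈ H`. Then `u` minimizes
`u ↦ ½‖u − f‖² + α J(u)` if and only if `u` is the element of minimal norm of the set
`f − αK`; in particular `‖u‖ = min_{w ∈ f − αK} ‖w‖`. -/
theorem rof_minimizer_iff_min_norm {H : Type*} [NormedAddCommGroup H]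
    [InnerProductSpace ℝ H] [CompleteSpace H] (K : Set H) (hne : K.Nonempty)
    (hcl : IsClosed K) (hconv : Convex ℝ K) (α : ℝ) (hα : 0 < α) (f u : H) :
    (∀ v : H, rofObj K α f u ≤ rofObj K α f v) ↔
      (u ∈ {w : H | ∃ k ∈ K, w = f - α • k} ∧
        ∀ w ∈ {w : H | ∃ k ∈ K, w = f - α • k}, ‖u‖ ≤ ‖w‖) := by
  set S : Set H := {w : H | ∃ k ∈ K, w = f - α • k} with hS_def
  -- basic properties of S
  have hS_mem : ∀ w : H, w ∈ S ↔ α⁻¹ • (f - w) ∈ K := by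
    intro w
    constructor
    · rintro ⟨k, hk, rfl⟩
      have : α⁻¹ • (f - (f - α • k)) = k := by
        rw [sub_sub_cancel, smul_smul, inv_mul_cancel₀ hα.ne', one_smul]
      rwa [this]
    · intro h
      exact ⟨α⁻¹ • (f - w), h, by rw [smul_smul, mul_inv_cancel₀ hα.ne', one_smul]; abel⟩
  have hS_ne : S.Nonempty := ⟨f - α • hne.choose, hne.choose, hne.choose_spec, rfl⟩
  have hS_closed : IsClosed S := by
    have : S = (fun w : H => α⁻¹ • (f - w)) ⁻¹' K := Set.ext fun w => hS_mem w
    rw [this]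
    exact hcl.preimage ((continuous_const.sub continuous_id).const_smul α⁻¹)
  have hS_conv : Convex ℝ S := by
    rintro w₁ ⟨k₁, hk₁, rfl⟩ w₂ ⟨k₂, hk₂, rfl⟩ a b ha hb hab
    refine ⟨a • k₁ + b • k₂, hconv hk₁ hk₂ ha hb hab, ?_⟩
    match_scalars <;> nlinarith [hab]
  -- the minimal norm element of S
  obtain ⟨u₀, hu₀S, hu₀⟩ :=
    exists_norm_eq_iInf_of_complete_convex hS_ne (hS_closed.isComplete) hS_conv (0 : H)
  have hu₀proj : ∀ w ∈ S, 0 ≤ ⟪u₀, w - u₀⟫ := by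
    intro w hw
    have h := (norm_eq_iInf_iff_real_inner_le_zero hS_conv hu₀S).1 hu₀ w hw
    rw [zero_sub, inner_neg_left] at h
    linarith
  have hu₀min : ∀ w ∈ S, ‖u₀‖ ≤ ‖w‖ := by
    intro w hw
    have h1 : (⨅ z : S, ‖(0 : H) - z‖) ≤ ‖(0 : H) - w‖ :=
      ciInf_le ⟨0, fun x ⟨z, hz⟩ => hz ▸ norm_nonneg _⟩ (⟨w, hw⟩ : S)
    rw [← hu₀] at h1
    simpa using h1
  -- u₀ is a minimizer
  have hmin₀ : ∀ v : H, rofObj K α f u₀ ≤ rofObj K α f v :=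
    rof_min_of_proj K α hα f u₀ hu₀S hu₀proj
  constructor
  · -- minimizer → minimal norm element
    intro hmin
    suffices hu : u = u₀ by
      rw [hu]; exact ⟨hu₀S, hu₀min⟩
    -- rofObj at u₀ is finite; compare
    obtain ⟨k₀, hk₀, hu₀eq⟩ := hu₀S
    -- lower bound for rofObj at u
    have h1 : ((⟪k₀, u⟫ : ℝ) : EReal) ≤ suppFn K u := le_iSup₂_of_le k₀ hk₀ le_rfl
    have h2 : ((2⁻¹ * ‖u - f‖ ^ 2 + α * ⟪k₀, u⟫ : ℝ) : EReal) ≤ rofObj K α f u := by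
      calc ((2⁻¹ * ‖u - f‖ ^ 2 + α * ⟪k₀, u⟫ : ℝ) : EReal)
          = ((2⁻¹ * ‖u - f‖ ^ 2 : ℝ) : EReal) + (α : EReal) * ((⟪k₀, u⟫ : ℝ) : EReal) := by
            rw [← EReal.coe_mul, ← EReal.coe_add]
        _ ≤ rofObj K α f u :=
            add_le_add (le_refl _) (mul_le_mul_of_nonneg_left h1 (by exact_mod_cast hα.le))
    -- value at u₀
    have hsup_le : ∀ k ∈ K, ⟪k, u₀⟫ ≤ ⟪k₀, u₀⟫ := by
      intro k hk
      have h := hu₀proj (f - α • k) ⟨k, hk, rfl⟩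
      have hsub : (f - α • k) - u₀ = α • (k₀ - k) := by
        rw [hu₀eq, smul_sub]; abel
      rw [hsub, real_inner_smul_right, inner_sub_right] at h
      have : 0 ≤ ⟪u₀, k₀⟫ - ⟪u₀, k⟫ := nonneg_of_mul_nonneg_right h hα
      have e1 := real_inner_comm u₀ k
      have e2 := real_inner_comm u₀ k₀
      linarith
    have hsupp : suppFn K u₀ = ((⟪k₀, u₀⟫ : ℝ) : EReal) :=
      le_antisymm (iSup₂_le fun k hk => EReal.coe_le_coe_iff.2 (hsup_le k hk))
        (le_iSup₂_of_le k₀ hk₀ le_rfl)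
    have hobj₀ : rofObj K α f u₀ = ((2⁻¹ * ‖u₀ - f‖ ^ 2 + α * ⟪k₀, u₀⟫ : ℝ) : EReal) := by
      rw [rofObj, hsupp, ← EReal.coe_mul, ← EReal.coe_add]
    have hle : rofObj K α f u ≤ rofObj K α f u₀ := hmin u₀
    have h3 : ((2⁻¹ * ‖u - f‖ ^ 2 + α * ⟪k₀, u⟫ : ℝ) : EReal) ≤
        ((2⁻¹ * ‖u₀ - f‖ ^ 2 + α * ⟪k₀, u₀⟫ : ℝ) : EReal) :=
      le_trans h2 (hle.trans_eq hobj₀)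
    have h4 : (2⁻¹ * ‖u - f‖ ^ 2 + α * ⟪k₀, u⟫ : ℝ) ≤
        2⁻¹ * ‖u₀ - f‖ ^ 2 + α * ⟪k₀, u₀⟫ := EReal.coe_le_coe_iff.1 h3
    have h5 := rof_key_identity α k₀ f u
    rw [← hu₀eq] at h5
    have h6 : 2⁻¹ * ‖u - u₀‖ ^ 2 ≤ 0 := by
      have h7 : (2⁻¹ * ‖u₀ - f‖ ^ 2 + α * ⟪k₀, u₀⟫ : ℝ) =
          2⁻¹ * ‖u₀ - f‖ ^ 2 + α * ⟪k₀, u₀⟫ := rfl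
      nlinarith [h5, h4]
    have : ‖u - u₀‖ = 0 := by nlinarith [norm_nonneg (u - u₀), sq_nonneg ‖u - u₀‖]
    exact sub_eq_zero.1 (norm_eq_zero.1 this)
  · -- minimal norm element → minimizer
    rintro ⟨huS, humin⟩
    apply rof_min_of_proj K α hα f u huS
    intro w hw
    haveI : Nonempty S := ⟨⟨u, huS⟩⟩
    have hnorm : ‖(0 : H) - u‖ = ⨅ z : S, ‖(0 : H) - z‖ := by
      apply le_antisymm
      · apply le_ciInf
        rintro ⟨z, hz⟩
        simpa using humin z hz
      · exact ciInf_le ⟨0, fun x ⟨z, hz⟩ => hz ▸ norm_nonneg _⟩ (⟨u, huS⟩ : S)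
    have h := (norm_eq_iInf_iff_real_inner_le_zero hS_conv huS).1 hnorm w hw
    rw [zero_sub, inner_neg_left] at h
    linarith
end

section
/- Let H be a real Hilbert space, K ⊆ H a nonempty closed convex set, J its support function J(u) = sup_{h ∈ K} ⟨h, u⟩, α > 0 and f ∈ H. Then the unique minimizer u_α of u ↦ ½‖u − f‖² + α J(u) satisfies u_α = f − P_{αK}(f), where P_{αK} denotes the metric projection onto the closed convex set αK = {αk : k ∈ K}. -/
open scoped RealInnerProductSpace Pointwise

section aux
variable {H : Type*} [NormedAddCommGroup H] [InnerProductSpace ℝ H]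

lemma suppFn_le_coe {K : Set H} {u : H} {c : ℝ} (h : ∀ k ∈ K, ⟪k, u⟫ ≤ c) :
    suppFn K u ≤ (c : EReal) := by
  refine iSup₂_le fun k hk => ?_
  exact_mod_cast h k hk

lemma coe_le_suppFn {K : Set H} {u : H} {k : H} (hk : k ∈ K) :
    ((⟪k, u⟫ : ℝ) : EReal) ≤ suppFn K u :=
  le_iSup₂_of_le k hk le_rfl

lemma suppFn_zero {K : Set H} (hne : K.Nonempty) : suppFn K 0 = 0 := by
  obtain ⟨k, hk⟩ := hne
  refine le_antisymm (suppFn_le_coe fun h _ => by simp [inner_zero_right]) ?_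
  have := coe_le_suppFn (u := (0 : H)) hk
  simpa [inner_zero_right] using this

end aux

/-- Let `H` be a real Hilbert space, `K ⊆ H` nonempty closed convex,
`J` its support function, `α > 0` and `f ∈ H`. Then the minimizer `u` of
`u ↦ ½‖u − f‖² + α J(u)` satisfies `u = f − P_{αK}(f)`, where `P_{αK}(f)` is the
unique nearest point to `f` in the closed convex set `αK`. -/
theorem rof_minimizer_eq_sub_proj {H : Type*} [NormedAddCommGroup H]
    [InnerProductSpace ℝ H] [CompleteSpace H] (K : Set H) (hne : K.Nonempty)
    (hcl : IsClosed K) (hconv : Convex ℝ K) (α : ℝ) (hα : 0 < α) (f u : H)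
    (hmin : ∀ v : H, rofObj K α f u ≤ rofObj K α f v) :
    ∃ p : H, (p ∈ α • K ∧ ∀ w ∈ α • K, ‖f - p‖ ≤ ‖f - w‖) ∧ u = f - p := by
  have hsne : (α • K).Nonempty := hne.smul_set
  have hscl : IsClosed (α • K) := hcl.smul_of_ne_zero (ne_of_gt hα)
  have hsconv : Convex ℝ (α • K) := hconv.smul α
  obtain ⟨p, hp, hpmin⟩ :=
    exists_norm_eq_iInf_of_complete_convex hsne (hscl.isComplete) hsconv f
  have hchar : ∀ w ∈ α • K, ⟪f - p, w - p⟫ ≤ 0 :=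
    (norm_eq_iInf_iff_real_inner_le_zero hsconv hp).mp hpmin
  have hnear : ∀ w ∈ α • K, ‖f - p‖ ≤ ‖f - w‖ := by
    intro w hw
    rw [hpmin]
    have hbdd : BddBelow (Set.range fun w : ↥(α • K) => ‖f - (w : H)‖) :=
      ⟨0, Set.forall_mem_range.2 fun _ => norm_nonneg _⟩
    exact ciInf_le hbdd ⟨w, hw⟩
  refine ⟨p, ⟨hp, hnear⟩, ?_⟩
  set u₀ : H := f - p with hu₀def
  obtain ⟨h₀, hh₀⟩ := hne
  have hJu_ne_bot : suppFn K u ≠ ⊥ := by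
    intro hbot
    have := coe_le_suppFn (u := u) hh₀
    rw [hbot] at this
    exact (EReal.coe_ne_bot _) (le_bot_iff.mp this)
  have hobj0 : rofObj K α f 0 = ((2⁻¹ * ‖f‖ ^ 2 : ℝ) : EReal) := by
    rw [rofObj, suppFn_zero ⟨h₀, hh₀⟩]
    simp
  have hJu_ne_top : suppFn K u ≠ ⊤ := by
    intro htop
    have h1 := hmin 0
    rw [hobj0] at h1
    rw [rofObj, htop, EReal.mul_top_of_pos (by exact_mod_cast hα),
      EReal.add_top_of_ne_bot (EReal.coe_ne_bot _)] at h1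
    exact (EReal.coe_lt_top _).not_ge h1
  set r : ℝ := (suppFn K u).toReal with hrdef
  have hr : suppFn K u = (r : EReal) := (EReal.coe_toReal hJu_ne_top hJu_ne_bot).symm
  have hobju : rofObj K α f u = ((2⁻¹ * ‖u - f‖ ^ 2 + α * r : ℝ) : EReal) := by
    rw [rofObj, hr]
    push_cast
    ring
  obtain ⟨k₀, hk₀, hpk₀⟩ := hp
  set s : ℝ := ⟪p, u₀⟫ / α with hsdef
  have hαs : α * s = ⟪p, u₀⟫ := by
    rw [hsdef]; field_simp
  have hkey : ∀ k ∈ K, ⟪k, u₀⟫ ≤ s := by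
    intro k hk
    have h1 : ⟪u₀, α • k⟫ - ⟪u₀, p⟫ ≤ 0 := by
      simpa [inner_sub_right] using hchar (α • k) ⟨k, hk, rfl⟩
    rw [real_inner_smul_right] at h1
    rw [hsdef, le_div_iff₀ hα]
    have e1 : ⟪k, u₀⟫ = ⟪u₀, k⟫ := real_inner_comm _ _
    have e2 : ⟪p, u₀⟫ = ⟪u₀, p⟫ := real_inner_comm _ _
    nlinarith [h1]
  have hJu₀ : suppFn K u₀ = (s : EReal) := by
    refine le_antisymm (suppFn_le_coe hkey) ?_
    have h1 := coe_le_suppFn (u := u₀) hk₀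
    have h2 : ⟪k₀, u₀⟫ = s := by
      have h3 : ⟪p, u₀⟫ = α * ⟪k₀, u₀⟫ := by
        rw [← hpk₀, real_inner_smul_left]
      rw [hsdef, h3]
      field_simp
    rwa [h2] at h1
  have hu₀f : ‖u₀ - f‖ = ‖p‖ := by
    rw [hu₀def, show f - p - f = -p by abel, norm_neg]
  have hobju₀ : rofObj K α f u₀ = ((2⁻¹ * ‖p‖ ^ 2 + α * s : ℝ) : EReal) := by
    rw [rofObj, hJu₀, hu₀f]
    push_cast
    ring
  have hps : α * s = ⟪p, f⟫ - ‖p‖ ^ 2 := by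
    rw [hαs, hu₀def, inner_sub_right, real_inner_self_eq_norm_sq]
  -- u₀ is also a minimizer
  have hu₀min : ∀ v : H, ((2⁻¹ * ‖p‖ ^ 2 + α * s : ℝ) : EReal) ≤ rofObj K α f v := by
    intro v
    rcases eq_or_ne (suppFn K v) ⊤ with htop | htop
    · rw [rofObj, htop, EReal.mul_top_of_pos (by exact_mod_cast hα),
        EReal.add_top_of_ne_bot (EReal.coe_ne_bot _)]
      exact le_top
    · have hvb : suppFn K v ≠ ⊥ := by
        intro hbot
        have := coe_le_suppFn (u := v) hh₀
        rw [hbot] at this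
        exact (EReal.coe_ne_bot _) (le_bot_iff.mp this)
      set t : ℝ := (suppFn K v).toReal with htdef
      have ht : suppFn K v = (t : EReal) := (EReal.coe_toReal htop hvb).symm
      rw [rofObj, ht, ← EReal.coe_mul, ← EReal.coe_add, EReal.coe_le_coe_iff]
      have h4 : ⟪k₀, v⟫ ≤ t := by
        have h5 := coe_le_suppFn (u := v) hk₀
        rw [ht] at h5
        exact_mod_cast h5
      have h3 : ⟪p, v⟫ ≤ α * t := by
        have h6 : ⟪p, v⟫ = α * ⟪k₀, v⟫ := by rw [← hpk₀, real_inner_smul_left]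
        rw [h6]
        exact mul_le_mul_of_nonneg_left h4 hα.le
      have hexp : ‖v - f + p‖ ^ 2 = ‖v - f‖ ^ 2 + 2 * ⟪v - f, p⟫ + ‖p‖ ^ 2 :=
        norm_add_sq_real _ _
      have hsp : ⟪v - f, p⟫ = ⟪p, v⟫ - ⟪p, f⟫ := by
        rw [real_inner_comm, inner_sub_right]
      nlinarith [sq_nonneg ‖v - f + p‖]
  -- the two minimum values agree
  have hmm : 2⁻¹ * ‖u - f‖ ^ 2 + α * r = 2⁻¹ * ‖p‖ ^ 2 + α * s := by
    refine le_antisymm ?_ ?_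
    · have h1 := hmin u₀
      rw [hobju, hobju₀] at h1
      exact_mod_cast h1
    · have h1 := hu₀min u
      rw [hobju] at h1
      exact_mod_cast h1
  -- midpoint argument
  set v : H := (2⁻¹ : ℝ) • (u + u₀) with hvdef
  have hJv : suppFn K v ≤ ((2⁻¹ * r + 2⁻¹ * s : ℝ) : EReal) := by
    refine suppFn_le_coe fun k hk => ?_
    have hku : ⟪k, u⟫ ≤ r := by
      have := coe_le_suppFn (u := u) hk
      rw [hr] at this
      exact_mod_cast this
    have hku₀ : ⟪k, u₀⟫ ≤ s := hkey k hk
    have h7 : ⟪k, v⟫ = 2⁻¹ * ⟪k, u⟫ + 2⁻¹ * ⟪k, u₀⟫ := by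
      rw [hvdef, real_inner_smul_right, inner_add_right]
      ring
    rw [h7]
    linarith
  have hvle : rofObj K α f v ≤
      ((2⁻¹ * ‖v - f‖ ^ 2 + α * (2⁻¹ * r + 2⁻¹ * s) : ℝ) : EReal) := by
    have h8 : (α : EReal) * suppFn K v ≤ (α : EReal) * ((2⁻¹ * r + 2⁻¹ * s : ℝ) : EReal) :=
      mul_le_mul_of_nonneg_left hJv (by exact_mod_cast hα.le)
    calc rofObj K α f v ≤ ((2⁻¹ * ‖v - f‖ ^ 2 : ℝ) : EReal) +
          (α : EReal) * ((2⁻¹ * r + 2⁻¹ * s : ℝ) : EReal) := add_le_add_right h8 _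
      _ = _ := by rw [← EReal.coe_mul, ← EReal.coe_add]
  have hreal : 2⁻¹ * ‖u - f‖ ^ 2 + α * r ≤
      2⁻¹ * ‖v - f‖ ^ 2 + α * (2⁻¹ * r + 2⁻¹ * s) := by
    have h1 := (hmin v).trans hvle
    rw [hobju] at h1
    exact_mod_cast h1
  have hvf : v - f = (2⁻¹ : ℝ) • ((u - f) + (u₀ - f)) := by
    rw [hvdef]
    module
  have hn1 : ‖v - f‖ ^ 2 = 4⁻¹ * ‖(u - f) + (u₀ - f)‖ ^ 2 := by
    rw [hvf, norm_smul]
    simp [norm_inv]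
    ring
  have hn2 : ‖(u - f) + (u₀ - f)‖ ^ 2 =
      ‖u - f‖ ^ 2 + 2 * ⟪u - f, u₀ - f⟫ + ‖u₀ - f‖ ^ 2 := norm_add_sq_real _ _
  have hn3 : ‖u - u₀‖ ^ 2 =
      ‖u - f‖ ^ 2 - 2 * ⟪u - f, u₀ - f⟫ + ‖u₀ - f‖ ^ 2 := by
    rw [show u - u₀ = (u - f) - (u₀ - f) by abel]
    exact norm_sub_sq_real _ _
  have hzero : ‖u - u₀‖ ^ 2 ≤ 0 := by
    rw [hu₀f] at hn2 hn3
    linarith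
  have : u - u₀ = 0 := by
    rw [← norm_eq_zero]
    nlinarith [norm_nonneg (u - u₀)]
  rw [hu₀def] at this
  exact sub_eq_zero.mp this
end
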